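/- Let Ω ⊂ ℝ^d be a nonempty compact set and let f : M^+(Ω) → M^+(ℝ^{d'}) be a support-preserving map continuous in the extended 1-Wasserstein metric. Let μ₀ = Σ_{i=1}^n a⁰ᵢ δ_{x⁰ᵢ} ∈ M^+_{fin,dif,(n)}(Ω) and μ_p = Σ_{i=1}^n aᵖᵢ δ_{xᵖᵢ} with aᵖᵢ > 0, xᵖᵢ ∈ Ω, and suppose xᵖᵢ → x⁰ᵢ and aᵖᵢ → a⁰ᵢ as p → ∞ for all i. Let y⁰₁,…,y⁰_n ∈ ℝ^{d'} and, for each p, yᵖ₁,…,yᵖ_n ∈ ℝ^{d'} satisfy f(μ₀) = Σ_{i=1}^n a⁰ᵢ δ_{y⁰ᵢ} and f(μ_p) = Σ_{i=1}^n aᵖᵢ δ_{yᵖᵢ}. Then for every j ∈ {1,…,n}, yᵖⱼ → y⁰ⱼ as p → ∞. -/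

import Mathlib

open MeasureTheory Filter Set

/-- The 1-Wasserstein distance, via Kantorovich–Rubinstein duality. -/
noncomputable def W1 {E : Type*} [MeasurableSpace E] [PseudoMetricSpace E]
    (μ ν : Measure E) : ℝ :=
  ⨆ φ : {φ : E → ℝ // LipschitzWith 1 φ}, ((∫ x, φ.1 x ∂μ) - ∫ x, φ.1 x ∂ν)

/-- The extension of the 1-Wasserstein distance to positive finite measures. -/
noncomputable def W1ext {E : Type*} [MeasurableSpace E] [PseudoMetricSpace E]
    (μ ν : Measure E) : ℝ :=
  W1 ((μ Set.univ)⁻¹ • μ) ((ν Set.univ)⁻¹ • ν)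
    + |(μ Set.univ).toReal - (ν Set.univ).toReal|

/-- `M⁺(Ω)`: the strictly positive finite Borel measures supported in `Ω`. -/
def Mplus {E : Type*} [MeasurableSpace E] (Ω : Set E) : Set (Measure E) :=
  {μ | μ Set.univ ≠ 0 ∧ μ Set.univ ≠ ⊤ ∧ μ Ωᶜ = 0}

/-- A map `f : M⁺(Ω) → M⁺(ℝ^{d'})` is support-preserving if for every `n`, `c > 0` and
`x₁, …, xₙ ∈ Ω`, writing `μ = ∑ (c/n) δ_{xᵢ}`, there exist `y₁, …, yₙ` with
`f(μ) = ∑ (c/n) δ_{yᵢ}` and `xⱼ = xᵢ → yⱼ = yᵢ`. -/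
def SupportPreserving {E F : Type*} [MeasurableSpace E] [MeasurableSpace F]
    (Ω : Set E) (f : Measure E → Measure F) : Prop :=
  ∀ n : ℕ, 0 < n → ∀ c : ℝ, 0 < c → ∀ x : Fin n → E, (∀ i, x i ∈ Ω) →
    ∃ y : Fin n → F,
      f (∑ i, ENNReal.ofReal (c / n) • Measure.dirac (x i))
        = ∑ i, ENNReal.ofReal (c / n) • Measure.dirac (y i) ∧
      ∀ i j, x i = x j → y i = y j

/-- Continuity of `f : M⁺(Ω) → M⁺` with respect to the extended 1-Wasserstein metric. -/
def W1Continuous {E F : Type*} [MeasurableSpace E] [PseudoMetricSpace E]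
    [MeasurableSpace F] [PseudoMetricSpace F]
    (Ω : Set E) (f : Measure E → Measure F) : Prop :=
  ∀ μ ∈ Mplus Ω, ∀ ε > (0 : ℝ), ∃ δ > (0 : ℝ), ∀ ν ∈ Mplus Ω,
    W1ext μ ν < δ → W1ext (f μ) (f ν) < ε

/-!
Since `xᵖ → x⁰` and `aᵖ → a⁰`, the inputs converge in the extended Wasserstein distance, so by
continuity the images converge too: with `Aᵖᵢ = aᵖᵢ / ∑ₖ aᵖₖ`, the sums `∑ᵢ Aᵖᵢ φ(yᵖᵢ)` converge
to `∑ᵢ A⁰ᵢ φ(y⁰ᵢ)` for every 1-Lipschitz `φ`. Taking for `φ` the distance to `{y⁰ₖ}` shows that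
every `yᵖᵢ` eventually lies near some `y⁰ₖ`. Taking a plateau of height `r` around `y⁰ⱼ` then shows
that the weight of the indices `i` with `yᵖᵢ` within `r` of `y⁰ⱼ` converges to the weight of the
cluster `{i | y⁰ᵢ = y⁰ⱼ}`. As distinct index sets carry distinct `a⁰`-weight, these index sets
eventually equal the cluster, which contains `j`.
-/

open Metric Topology

section W1

variable {E : Type*} [MeasurableSpace E] [PseudoMetricSpace E]

lemma W1_nonneg (μ ν : Measure E) : 0 ≤ W1 μ ν := by
  by_cases h : BddAbove (range fun φ : {φ : E → ℝ // LipschitzWith 1 φ} =>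
      (∫ x, φ.1 x ∂μ) - ∫ x, φ.1 x ∂ν)
  · simpa [W1] using le_ciSup h ⟨fun _ => 0, LipschitzWith.const' 0⟩
  · rw [W1, Real.iSup_of_not_bddAbove h]

lemma W1ext_nonneg (μ ν : Measure E) : 0 ≤ W1ext μ ν :=
  add_nonneg (W1_nonneg _ _) (abs_nonneg _)

lemma W1_le_of_forall_lipschitz {μ ν : Measure E} {B : ℝ} (hB : 0 ≤ B)
    (h : ∀ φ : E → ℝ, LipschitzWith 1 φ → (∫ x, φ x ∂μ) - ∫ x, φ x ∂ν ≤ B) :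
    W1 μ ν ≤ B :=
  Real.iSup_le (fun φ => h φ.1 φ.2) hB

lemma abs_integral_sub_integral_le_W1 {μ ν : Measure E} {B : ℝ}
    (hB : ∀ φ : E → ℝ, LipschitzWith 1 φ → (∫ x, φ x ∂μ) - ∫ x, φ x ∂ν ≤ B)
    {φ : E → ℝ} (hφ : LipschitzWith 1 φ) :
    |(∫ x, φ x ∂μ) - ∫ x, φ x ∂ν| ≤ W1 μ ν := by
  have hbdd : BddAbove (range fun ψ : {ψ : E → ℝ // LipschitzWith 1 ψ} =>
      (∫ x, ψ.1 x ∂μ) - ∫ x, ψ.1 x ∂ν) := ⟨B, by rintro _ ⟨ψ, rfl⟩; exact hB ψ.1 ψ.2⟩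
  have hle : _ ≤ W1 μ ν := le_ciSup hbdd ⟨φ, hφ⟩
  have hle_neg : _ ≤ W1 μ ν := le_ciSup hbdd ⟨-φ, hφ.neg⟩
  simp only [Pi.neg_apply, integral_neg] at hle hle_neg
  exact abs_sub_le_iff.2 ⟨hle, by linarith⟩

end W1

lemma W1Continuous.tendsto_W1ext {E F : Type*} [MeasurableSpace E] [PseudoMetricSpace E]
    [MeasurableSpace F] [PseudoMetricSpace F] {Ω : Set E} {f : Measure E → Measure F}
    (hf : W1Continuous Ω f) {μ : Measure E} (hμ : μ ∈ Mplus Ω) {μs : ℕ → Measure E}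
    (hμs : ∀ p, μs p ∈ Mplus Ω) (h : Tendsto (fun p => W1ext μ (μs p)) atTop (𝓝 0)) :
    Tendsto (fun p => W1ext (f μ) (f (μs p))) atTop (𝓝 0) := by
  rw [Metric.tendsto_atTop] at h ⊢
  intro ε hε
  obtain ⟨δ, hδ, hfδ⟩ := hf μ hμ ε hε
  obtain ⟨N, hN⟩ := h δ hδ
  refine ⟨N, fun p hp => ?_⟩
  have hp := hN p hp
  rw [Real.dist_0_eq_abs, abs_of_nonneg (W1ext_nonneg _ _)] at hp ⊢
  exact hfδ _ (hμs p) hp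

section WeightedDirac

variable {ι E : Type*} [Fintype ι]

noncomputable def weightedDirac [MeasurableSpace E] (w : ι → ℝ) (u : ι → E) : Measure E :=
  ∑ i, ENNReal.ofReal (w i) • Measure.dirac (u i)

noncomputable def normalizeWeights (w : ι → ℝ) (i : ι) : ℝ :=
  w i / ∑ k, w k

lemma sum_normalizeWeights {w : ι → ℝ} (hw : ∑ i, w i ≠ 0) : ∑ i, normalizeWeights w i = 1 := by
  simp only [normalizeWeights, ← Finset.sum_div, div_self hw]

lemma normalizeWeights_nonneg {w : ι → ℝ} (hw : ∀ i, 0 ≤ w i) (i : ι) :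
    0 ≤ normalizeWeights w i :=
  div_nonneg (hw i) (Finset.sum_nonneg fun k _ => hw k)

lemma tendsto_normalizeWeights {w0 : ι → ℝ} {w : ℕ → ι → ℝ} (hs : ∑ i, w0 i ≠ 0)
    (hw : ∀ i, Tendsto (fun p => w p i) atTop (𝓝 (w0 i))) (i : ι) :
    Tendsto (fun p => normalizeWeights (w p) i) atTop (𝓝 (normalizeWeights w0 i)) :=
  (hw i).div (tendsto_finsetSum _ fun k _ => hw k) hs

lemma sum_mul_sub_sum_mul_le_of_lipschitz [PseudoMetricSpace E] {v w : ι → ℝ}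
    (hw : ∀ i, 0 ≤ w i) (hvw : ∑ i, v i = ∑ i, w i) (u x : ι → E) (b : E) {φ : E → ℝ}
    (hφ : LipschitzWith 1 φ) :
    ∑ i, v i * φ (u i) - ∑ i, w i * φ (x i)
      ≤ ∑ i, |v i - w i| * dist (u i) b + ∑ i, w i * dist (u i) (x i) := by
  have hφ' : ∀ a c, |φ a - φ c| ≤ dist a c := fun a c => by
    simpa [Real.dist_eq] using hφ.dist_le_mul a c
  -- `φ (b)` can be subtracted from every `φ (u i)` because the weights have equal sums
  calc ∑ i, v i * φ (u i) - ∑ i, w i * φ (x i)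
      = ∑ i, ((v i - w i) * (φ (u i) - φ b) + w i * (φ (u i) - φ (x i)))
          + (∑ i, v i - ∑ i, w i) * φ b := by
        simp only [Finset.sum_add_distrib, Finset.sum_sub_distrib, Finset.sum_mul, mul_sub,
          sub_mul]
        ring
    _ ≤ ∑ i, (|v i - w i| * dist (u i) b + w i * dist (u i) (x i)) := by
        rw [hvw, sub_self, zero_mul, add_zero]
        refine Finset.sum_le_sum fun i _ => add_le_add ?_ ?_
        · exact (le_abs_self _).trans (by rw [abs_mul]; gcongr; exact hφ' _ _)
        · exact mul_le_mul_of_nonneg_left ((le_abs_self _).trans (hφ' _ _)) (hw i)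
    _ = _ := Finset.sum_add_distrib

variable [MeasurableSpace E] {w : ι → ℝ}

lemma weightedDirac_apply_univ (hw : ∀ i, 0 ≤ w i) (u : ι → E) :
    weightedDirac w u univ = ENNReal.ofReal (∑ i, w i) := by
  simp [weightedDirac, Measure.finsetSum_apply, ENNReal.ofReal_sum_of_nonneg fun i _ => hw i]

lemma toReal_weightedDirac_apply_univ (hw : ∀ i, 0 ≤ w i) (u : ι → E) :
    (weightedDirac w u univ).toReal = ∑ i, w i := by
  rw [weightedDirac_apply_univ hw, ENNReal.toReal_ofReal (Finset.sum_nonneg fun i _ => hw i)]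

lemma weightedDirac_mem_Mplus {Ω : Set E} (hΩ : MeasurableSet Ω) (hw : ∀ i, 0 ≤ w i)
    (hs : 0 < ∑ i, w i) {u : ι → E} (hu : ∀ i, u i ∈ Ω) : weightedDirac w u ∈ Mplus Ω := by
  refine ⟨by simpa [weightedDirac_apply_univ hw] using hs,
    by simp [weightedDirac_apply_univ hw], ?_⟩
  simp [weightedDirac, Measure.finsetSum_apply, Measure.dirac_apply' _ hΩ.compl, hu]

variable [MeasurableSingletonClass E]

lemma integral_weightedDirac (hw : ∀ i, 0 ≤ w i) (u : ι → E) (φ : E → ℝ) :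
    ∫ z, φ z ∂(weightedDirac w u) = ∑ i, w i * φ (u i) := by
  rw [weightedDirac, integral_finsetSum_measure fun i _ =>
    (integrable_dirac enorm_lt_top).smul_measure ENNReal.ofReal_ne_top]
  simp [integral_smul_measure, ENNReal.toReal_ofReal (hw _)]

lemma integral_normalized_weightedDirac (hw : ∀ i, 0 ≤ w i) (hs : 0 < ∑ i, w i)
    (u : ι → E) (φ : E → ℝ) :
    ∫ z, φ z ∂((weightedDirac w u univ)⁻¹ • weightedDirac w u)
      = ∑ i, normalizeWeights w i * φ (u i) := by
  rw [integral_smul_measure, integral_weightedDirac hw, weightedDirac_apply_univ hw,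
    ENNReal.toReal_inv, ENNReal.toReal_ofReal hs.le, smul_eq_mul, Finset.mul_sum]
  simp only [normalizeWeights]
  exact Finset.sum_congr rfl fun i _ => by ring

end WeightedDirac

section Convergence

variable {ι E : Type*} [Fintype ι] [Nonempty ι] [MeasurableSpace E] [MeasurableSingletonClass E]
  [PseudoMetricSpace E] {w0 : ι → ℝ} {w : ℕ → ι → ℝ} {u0 : ι → E} {u : ℕ → ι → E}

lemma integral_sub_integral_normalized_weightedDirac_le {v w : ι → ℝ} (hv : ∀ i, 0 < v i)
    (hw : ∀ i, 0 < w i) (u x : ι → E) (b : E) {φ : E → ℝ} (hφ : LipschitzWith 1 φ) :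
    (∫ z, φ z ∂((weightedDirac v u univ)⁻¹ • weightedDirac v u))
        - ∫ z, φ z ∂((weightedDirac w x univ)⁻¹ • weightedDirac w x)
      ≤ ∑ i, |normalizeWeights v i - normalizeWeights w i| * dist (u i) b
          + ∑ i, normalizeWeights w i * dist (u i) (x i) := by
  have hvs : 0 < ∑ i, v i := Finset.sum_pos (fun i _ => hv i) Finset.univ_nonempty
  have hws : 0 < ∑ i, w i := Finset.sum_pos (fun i _ => hw i) Finset.univ_nonempty
  rw [integral_normalized_weightedDirac (fun i => (hv i).le) hvs,
    integral_normalized_weightedDirac (fun i => (hw i).le) hws]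
  exact sum_mul_sub_sum_mul_le_of_lipschitz (normalizeWeights_nonneg fun i => (hw i).le)
    (by rw [sum_normalizeWeights hvs.ne', sum_normalizeWeights hws.ne']) u x b hφ

lemma tendsto_W1ext_weightedDirac (hw0 : ∀ i, 0 < w0 i) (hw : ∀ p i, 0 < w p i)
    (hwconv : ∀ i, Tendsto (fun p => w p i) atTop (𝓝 (w0 i)))
    (huconv : ∀ i, Tendsto (fun p => u p i) atTop (𝓝 (u0 i))) :
    Tendsto (fun p => W1ext (weightedDirac w0 u0) (weightedDirac (w p) (u p))) atTop (𝓝 0) := by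
  inhabit ι
  have hs0 : 0 < ∑ i, w0 i := Finset.sum_pos (fun i _ => hw0 i) Finset.univ_nonempty
  have hnorm := tendsto_normalizeWeights hs0.ne' hwconv
  set b := u0 default
  have hbound : ∀ p, W1ext (weightedDirac w0 u0) (weightedDirac (w p) (u p))
      ≤ ∑ i, |normalizeWeights w0 i - normalizeWeights (w p) i| * dist (u0 i) b
          + ∑ i, normalizeWeights (w p) i * dist (u0 i) (u p i)
          + |∑ i, w0 i - ∑ i, w p i| := by
    intro p
    rw [W1ext, toReal_weightedDirac_apply_univ (fun i => (hw0 i).le),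
      toReal_weightedDirac_apply_univ (fun i => (hw p i).le)]
    refine add_le_add_left (W1_le_of_forall_lipschitz ?_ fun φ hφ => ?_) _
    · exact add_nonneg (Finset.sum_nonneg fun i _ => by positivity) (Finset.sum_nonneg fun i _ =>
        mul_nonneg (normalizeWeights_nonneg (fun k => (hw p k).le) i) dist_nonneg)
    · exact integral_sub_integral_normalized_weightedDirac_le hw0 (hw p) u0 (u p) b hφ
  have hlim : Tendsto (fun p => ∑ i, |normalizeWeights w0 i - normalizeWeights (w p) i|
        * dist (u0 i) b + ∑ i, normalizeWeights (w p) i * dist (u0 i) (u p i)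
          + |∑ i, w0 i - ∑ i, w p i|) atTop
      (𝓝 (∑ i, |normalizeWeights w0 i - normalizeWeights w0 i| * dist (u0 i) b
        + ∑ i, normalizeWeights w0 i * dist (u0 i) (u0 i) + |∑ i, w0 i - ∑ i, w0 i|)) := by
    refine ((tendsto_finsetSum _ fun i _ => ?_).add (tendsto_finsetSum _ fun i _ => ?_)).add ?_
    · exact ((tendsto_const_nhds.sub (hnorm i)).abs).mul_const _
    · exact (hnorm i).mul (tendsto_const_nhds.dist (huconv i))
    · exact (tendsto_const_nhds.sub (tendsto_finsetSum _ fun i _ => hwconv i)).abs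
  simp only [sub_self, abs_zero, zero_mul, dist_self, mul_zero, Finset.sum_const_zero,
    add_zero] at hlim
  exact squeeze_zero (fun p => W1ext_nonneg _ _) hbound hlim

lemma tendsto_sum_mul_of_tendsto_W1ext (hw0 : ∀ i, 0 < w0 i) (hw : ∀ p i, 0 < w p i)
    (h : Tendsto (fun p => W1ext (weightedDirac w0 u0) (weightedDirac (w p) (u p))) atTop (𝓝 0))
    {φ : E → ℝ} (hφ : LipschitzWith 1 φ) :
    Tendsto (fun p => ∑ i, normalizeWeights (w p) i * φ (u p i)) atTop
      (𝓝 (∑ i, normalizeWeights w0 i * φ (u0 i))) := by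
  inhabit ι
  have hs0 : 0 < ∑ i, w0 i := Finset.sum_pos (fun i _ => hw0 i) Finset.univ_nonempty
  have hs : ∀ p, 0 < ∑ i, w p i := fun p => Finset.sum_pos (fun i _ => hw p i) Finset.univ_nonempty
  refine tendsto_iff_dist_tendsto_zero.2 (squeeze_zero (fun _ => dist_nonneg) (fun p => ?_) h)
  rw [Real.dist_eq, abs_sub_comm, ← integral_normalized_weightedDirac (fun i => (hw0 i).le) hs0,
    ← integral_normalized_weightedDirac (fun i => (hw p i).le) (hs p)]
  have hle := abs_integral_sub_integral_le_W1 (fun ψ hψ =>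
    integral_sub_integral_normalized_weightedDirac_le hw0 (hw p) u0 (u p) (u0 default) hψ) hφ
  exact hle.trans (le_add_of_nonneg_right (abs_nonneg _))

end Convergence

section Atoms

variable {ι F : Type*} [MetricSpace F]

noncomputable def plateau (c : F) (r : ℝ) (z : F) : ℝ :=
  min r (max (2 * r - dist z c) 0)

lemma lipschitzWith_plateau (c : F) (r : ℝ) : LipschitzWith 1 (plateau c r) := by
  have h :=
    (((LipschitzWith.const (2 * r)).sub (LipschitzWith.dist_left c)).max_const 0).const_min r
  rw [zero_add] at h
  exact h

lemma plateau_of_dist_le {c z : F} {r : ℝ} (hr : 0 ≤ r) (h : dist z c ≤ r) :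
    plateau c r z = r := by
  rw [plateau, max_eq_left (by linarith), min_eq_left (by linarith)]

lemma plateau_of_le_dist {c z : F} {r : ℝ} (hr : 0 ≤ r) (h : 2 * r ≤ dist z c) :
    plateau c r z = 0 := by
  rw [plateau, max_eq_right (by linarith), min_eq_right hr]

lemma eventually_three_mul_le_dist [Finite ι] (y0 : ι → F) :
    ∀ᶠ r in 𝓝[>] (0 : ℝ), ∀ i k, y0 i ≠ y0 k → 3 * r ≤ dist (y0 i) (y0 k) := by
  have h3 : Tendsto (fun r : ℝ => 3 * r) (𝓝[>] 0) (𝓝 0) := by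
    simpa using ((continuous_const_mul (3 : ℝ)).tendsto 0).mono_left nhdsWithin_le_nhds
  refine eventually_all.2 fun i => eventually_all.2 fun k => ?_
  by_cases h : y0 i = y0 k
  · exact Eventually.of_forall fun _ hne => absurd h hne
  · exact (h3.eventually_lt_const (dist_pos.2 h)).mono fun r hr _ => hr.le

lemma sum_mul_plateau_eq [Fintype ι] {y0 : ι → F} {r : ℝ} (hr : 0 < r)
    (hsep : ∀ i k, y0 i ≠ y0 k → 3 * r ≤ dist (y0 i) (y0 k)) (j : ι) {z : ι → F}
    (hz : ∀ i, ∃ k, dist (z i) (y0 k) < r) (w : ι → ℝ) :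
    ∑ i, w i * plateau (y0 j) r (z i)
      = r * ∑ i ∈ Finset.univ.filter fun i => dist (z i) (y0 j) ≤ r, w i := by
  rw [Finset.sum_filter, Finset.mul_sum]
  refine Finset.sum_congr rfl fun i _ => ?_
  split_ifs with h
  · rw [plateau_of_dist_le hr.le h, mul_comm]
  · obtain ⟨k, hk⟩ := hz i
    have hkj : y0 k ≠ y0 j := fun hkj => h (by rw [← hkj]; exact hk.le)
    have htri := dist_triangle_left (y0 k) (y0 j) (z i)
    rw [plateau_of_le_dist hr.le (by linarith [hsep k j hkj]), mul_zero, mul_zero]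

lemma eventually_eq_of_tendsto_comp_injective {α β X : Type*} [Finite β] [TopologicalSpace X]
    [T1Space X] {l : Filter α} {g : β → X} (hg : Function.Injective g) {N : α → β} {K : β}
    (h : Tendsto (fun a => g (N a)) l (𝓝 (g K))) : ∀ᶠ a in l, N a = K := by
  have hne : ∀ᶠ a in l, ∀ M, M ≠ K → g (N a) ≠ g M := by
    refine eventually_all.2 fun M => ?_
    by_cases hM : M = K
    · exact Eventually.of_forall fun _ hMK => absurd hM hMK
    · exact (h.eventually_ne (hg.ne hM).symm).mono fun _ ha _ => ha
  filter_upwards [hne] with a ha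
  by_contra hNK
  exact ha (N a) hNK rfl

lemma tendsto_sum_sub_sum_of_tendsto {α : Type*} [Fintype ι] {l : Filter α} {A0 : ι → ℝ}
    {A : α → ι → ℝ} (hA : ∀ i, Tendsto (fun a => A a i) l (𝓝 (A0 i))) (N : α → Finset ι) :
    Tendsto (fun a => ∑ i ∈ N a, A a i - ∑ i ∈ N a, A0 i) l (𝓝 0) := by
  have hlim : Tendsto (fun a => ∑ i, |A a i - A0 i|) l (𝓝 0) := by
    simpa using tendsto_finsetSum _ fun i _ => ((hA i).sub_const (A0 i)).abs
  refine squeeze_zero_norm (fun a => ?_) hlim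
  rw [Real.norm_eq_abs, ← Finset.sum_sub_distrib]
  exact (Finset.abs_sum_le_sum_abs _ _).trans
    (Finset.sum_le_sum_of_subset_of_nonneg (Finset.subset_univ _) fun i _ _ => abs_nonneg _)

variable [Fintype ι] {A0 : ι → ℝ} {A : ℕ → ι → ℝ} {y0 : ι → F} {y : ℕ → ι → F}

lemma tendsto_infDist_range (hA0 : ∀ i, 0 < A0 i) (hA : ∀ p i, 0 < A p i)
    (hAconv : ∀ i, Tendsto (fun p => A p i) atTop (𝓝 (A0 i)))
    (htest : ∀ φ : F → ℝ, LipschitzWith 1 φ →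
      Tendsto (fun p => ∑ i, A p i * φ (y p i)) atTop (𝓝 (∑ i, A0 i * φ (y0 i))))
    (i : ι) : Tendsto (fun p => infDist (y p i) (range y0)) atTop (𝓝 0) := by
  have hsum := htest _ (lipschitz_infDist_pt (range y0))
  simp only [infDist_zero_of_mem (mem_range_self _), mul_zero, Finset.sum_const_zero] at hsum
  have hterm : Tendsto (fun p => A p i * infDist (y p i) (range y0)) atTop (𝓝 0) :=
    squeeze_zero (fun p => mul_nonneg (hA p i).le infDist_nonneg)
      (fun p => Finset.single_le_sum (f := fun k => A p k * infDist (y p k) (range y0))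
        (fun k _ => mul_nonneg (hA p k).le infDist_nonneg) (Finset.mem_univ i)) hsum
  have hdiv := hterm.div (hAconv i) (hA0 i).ne'
  rw [zero_div] at hdiv
  exact hdiv.congr fun p => mul_div_cancel_left₀ _ (hA p i).ne'

theorem tendsto_of_forall_lipschitz_tendsto_sum_mul (hA0 : ∀ i, 0 < A0 i)
    (hA : ∀ p i, 0 < A p i) (hAconv : ∀ i, Tendsto (fun p => A p i) atTop (𝓝 (A0 i)))
    (hinj : Function.Injective fun N : Finset ι => ∑ i ∈ N, A0 i)
    (htest : ∀ φ : F → ℝ, LipschitzWith 1 φ →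
      Tendsto (fun p => ∑ i, A p i * φ (y p i)) atTop (𝓝 (∑ i, A0 i * φ (y0 i))))
    (j : ι) : Tendsto (fun p => y p j) atTop (𝓝 (y0 j)) := by
  classical
  have hnear : ∀ r > 0, ∀ᶠ p in atTop, ∀ i, ∃ k, dist (y p i) (y0 k) < r := fun r hr =>
    eventually_all.2 fun i =>
      ((tendsto_infDist_range hA0 hA hAconv htest i).eventually_lt_const hr).mono fun p hp => by
        obtain ⟨_, ⟨k, rfl⟩, hk⟩ := (infDist_lt_iff ⟨y0 j, mem_range_self j⟩).1 hp
        exact ⟨k, hk⟩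
  have hsmall : ∀ᶠ r in 𝓝[>] (0 : ℝ), ∀ᶠ p in atTop, dist (y p j) (y0 j) ≤ r := by
    filter_upwards [eventually_three_mul_le_dist y0, self_mem_nhdsWithin] with r hsep (hr : 0 < r)
    set N : ℕ → Finset ι := fun p => Finset.univ.filter fun i => dist (y p i) (y0 j) ≤ r
    set K : Finset ι := Finset.univ.filter fun i => dist (y0 i) (y0 j) ≤ r
    have hK : ∑ i, A0 i * plateau (y0 j) r (y0 i) = r * ∑ i ∈ K, A0 i :=
      sum_mul_plateau_eq hr hsep j (fun i => ⟨i, by simpa using hr⟩) A0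
    have hN : (fun p => ∑ i, A p i * plateau (y0 j) r (y p i))
        =ᶠ[atTop] fun p => r * ∑ i ∈ N p, A p i :=
      (hnear r hr).mono fun p hp => sum_mul_plateau_eq hr hsep j hp (A p)
    have hNA : Tendsto (fun p => ∑ i ∈ N p, A p i) atTop (𝓝 (∑ i ∈ K, A0 i)) := by
      have := ((htest _ (lipschitzWith_plateau (y0 j) r)).congr' hN).const_mul r⁻¹
      simpa [hK, inv_mul_cancel_left₀ hr.ne'] using this
    have hNA0 : Tendsto (fun p => ∑ i ∈ N p, A0 i) atTop (𝓝 (∑ i ∈ K, A0 i)) := by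
      simpa using hNA.sub (tendsto_sum_sub_sum_of_tendsto hAconv N)
    filter_upwards [eventually_eq_of_tendsto_comp_injective hinj hNA0] with p hp
    have hj : j ∈ N p := hp ▸ Finset.mem_filter.2 ⟨Finset.mem_univ j, by simpa using hr.le⟩
    exact (Finset.mem_filter.1 hj).2
  refine Metric.tendsto_nhds.2 fun ε hε => ?_
  obtain ⟨r, hr, hrε⟩ := (hsmall.and (Ioo_mem_nhdsGT hε)).exists
  exact hr.mono fun p hp => hp.trans_lt hrε.2

end Atoms

lemma injective_sum_of_forall_disjoint_sum_ne {ι : Type*} [DecidableEq ι] {a : ι → ℝ}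
    (ha : ∀ i, 0 < a i)
    (hdif : ∀ J K : Finset ι, J.Nonempty → K.Nonempty → Disjoint J K →
      ∑ j ∈ J, a j ≠ ∑ k ∈ K, a k) :
    Function.Injective fun N : Finset ι => ∑ i ∈ N, a i := by
  intro N M hNM
  have hsdiff : ∑ i ∈ N \ M, a i = ∑ i ∈ M \ N, a i := Finset.sum_sdiff_eq_sum_sdiff_iff.2 hNM
  have hpos : ∀ J : Finset ι, J.Nonempty ↔ 0 < ∑ i ∈ J, a i := fun J =>
    ⟨Finset.sum_pos fun i _ => ha i, fun h => Finset.nonempty_of_sum_ne_zero h.ne'⟩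
  have hiff : (N \ M).Nonempty ↔ (M \ N).Nonempty := by rw [hpos, hpos, hsdiff]
  by_cases hJ : (N \ M).Nonempty
  · exact absurd hsdiff (hdif _ _ hJ (hiff.1 hJ) disjoint_sdiff_sdiff)
  · have hK := hiff.not.1 hJ
    rw [Finset.not_nonempty_iff_eq_empty, Finset.sdiff_eq_empty_iff_subset] at hJ hK
    exact hJ.antisymm hK

theorem token_images_converge {d d' : ℕ}
    (Ω : Set (EuclideanSpace ℝ (Fin d))) (hΩcpt : IsCompact Ω)
    (f : Measure (EuclideanSpace ℝ (Fin d)) → Measure (EuclideanSpace ℝ (Fin d')))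
    (hcont : W1Continuous Ω f)
    (n : ℕ)
    (x0 : Fin n → EuclideanSpace ℝ (Fin d)) (a0 : Fin n → ℝ)
    (hx0 : ∀ i, x0 i ∈ Ω) (ha0 : ∀ i, 0 < a0 i)
    (hdif : ∀ J K : Finset (Fin n), J.Nonempty → K.Nonempty → Disjoint J K →
      ∑ j ∈ J, a0 j ≠ ∑ k ∈ K, a0 k)
    (xp : ℕ → Fin n → EuclideanSpace ℝ (Fin d)) (ap : ℕ → Fin n → ℝ)
    (hxp : ∀ p i, xp p i ∈ Ω) (hap : ∀ p i, 0 < ap p i)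
    (hxconv : ∀ i, Filter.Tendsto (fun p => xp p i) Filter.atTop (nhds (x0 i)))
    (haconv : ∀ i, Filter.Tendsto (fun p => ap p i) Filter.atTop (nhds (a0 i)))
    (y0 : Fin n → EuclideanSpace ℝ (Fin d'))
    (yp : ℕ → Fin n → EuclideanSpace ℝ (Fin d'))
    (hy0 : f (∑ i, ENNReal.ofReal (a0 i) • Measure.dirac (x0 i))
      = ∑ i, ENNReal.ofReal (a0 i) • Measure.dirac (y0 i))
    (hyp : ∀ p, f (∑ i, ENNReal.ofReal (ap p i) • Measure.dirac (xp p i))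
      = ∑ i, ENNReal.ofReal (ap p i) • Measure.dirac (yp p i)) :
    ∀ j : Fin n, Filter.Tendsto (fun p => yp p j) Filter.atTop (nhds (y0 j)) := by
  intro j
  have : Nonempty (Fin n) := ⟨j⟩
  have hΩ : MeasurableSet Ω := hΩcpt.isClosed.measurableSet
  have hs0 : 0 < ∑ i, a0 i := Finset.sum_pos (fun i _ => ha0 i) Finset.univ_nonempty
  have hs : ∀ p, 0 < ∑ i, ap p i := fun p =>
    Finset.sum_pos (fun i _ => hap p i) Finset.univ_nonempty
  have hμ := tendsto_W1ext_weightedDirac ha0 hap haconv hxconv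
  have hν : Tendsto (fun p => W1ext (weightedDirac a0 y0) (weightedDirac (ap p) (yp p)))
      atTop (𝓝 0) := by
    simpa only [weightedDirac, hy0, hyp] using hcont.tendsto_W1ext
      (weightedDirac_mem_Mplus hΩ (fun i => (ha0 i).le) hs0 hx0)
      (fun p => weightedDirac_mem_Mplus hΩ (fun i => (hap p i).le) (hs p) (hxp p)) hμ
  have hinj : Function.Injective fun N : Finset (Fin n) => ∑ i ∈ N, normalizeWeights a0 i := by
    intro N M hNM
    simp only [normalizeWeights, ← Finset.sum_div, div_left_inj' hs0.ne'] at hNM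
    exact injective_sum_of_forall_disjoint_sum_ne ha0 hdif hNM
  exact tendsto_of_forall_lipschitz_tendsto_sum_mul (fun i => div_pos (ha0 i) hs0)
    (fun p i => div_pos (hap p i) (hs p)) (tendsto_normalizeWeights hs0.ne' haconv) hinj
    (fun φ hφ => tendsto_sum_mul_of_tendsto_W1ext ha0 hap hν hφ) j
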